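/- arXiv:2210.05114 — 3 statements merged into one kernel-verified Lean document; each statement's English description precedes it below -/
import Mathlib

section
/- Let E be a finite dimensional subspace of a real Banach lattice X. If E does phase retrieval (|f|=|g| for f,g ∈ E implies f = ±g), then E does stable phase retrieval: there exists C ≥ 1 such that for all f,g ∈ E, min(‖f-g‖, ‖f+g‖) ≤ C‖|f|-|g|‖. -/
/-!
By the lattice identity `|f - g| ⊓ |f + g| = ||f| - |g||`, normalising `f - g` and `f + g` reduces
the estimate to a lower bound `δ > 0` for `‖|u| ⊓ |v|‖` over pairs of unit vectors of `E`
(with `C = max 1 δ⁻¹`). Such a `δ` exists by compactness of the unit sphere of the finite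
dimensional space `E`, and it is positive because phase retrieval rules out disjoint unit
vectors: if `|u| ⊓ |v| = 0` then `|u + v| = |u - v|`, so `u + v = ±(u - v)`.
-/

open Filter Topology

section LatticeOrderedGroup

variable {α : Type*} [Lattice α] [AddCommGroup α] [IsOrderedAddMonoid α]

lemma sub_inf_add_eq_sub_abs (x y : α) : (x - y) ⊓ (x + y) = x - |y| := by
  simp only [abs, sub_eq_add_neg]
  rw [← add_inf, neg_sup, neg_neg, inf_comm]

lemma abs_sub_inf_abs_add (f g : α) : |f - g| ⊓ |f + g| = |(|f| - |g|)| := by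
  let : DistribLattice α := AddCommGroup.toDistribLattice α
  refine le_antisymm ?_ (le_inf ?_ ?_)
  · have key (x y : α) : (x - y) ⊓ (x + y) ≤ |(|x| - |y|)| := by
      rw [sub_inf_add_eq_sub_abs]
      exact (sub_le_sub_right (le_abs_self x) _).trans (le_abs_self _)
    have key' (x y : α) : (x - y) ⊓ (x + y) ≤ |(|y| - |x|)| := by
      rw [abs_sub_comm]; exact key x y
    rw [abs, abs, inf_sup_left, inf_sup_right, inf_sup_right]
    refine sup_le (sup_le (key f g) ?_) (sup_le ?_ ?_)
    · simpa [sub_eq_add_neg, add_comm, inf_comm] using key' g f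
    · simpa [sub_eq_add_neg, add_comm, inf_comm] using key' (-g) f
    · simpa [sub_eq_add_neg, add_comm, inf_comm] using key (-f) g
  · exact abs_abs_sub_abs_le f g
  · simpa using abs_abs_sub_abs_le f (-g)

lemma nonneg_of_two_pow_nsmul_nonneg {y : α} (k : ℕ) (h : 0 ≤ 2 ^ k • y) : 0 ≤ y := by
  induction k generalizing y with
  | zero => simpa using h
  | succ k ih => exact nsmul_two_semiclosed (ih (by rwa [← mul_nsmul, ← pow_succ']))

end LatticeOrderedGroup

section HasSolidNorm

variable {X : Type*} [NormedAddCommGroup X] [Lattice X] [HasSolidNorm X] [IsOrderedAddMonoid X]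
  [NormedSpace ℝ X]

/- A normed lattice that is a real normed space need not be declared an ordered module: solidity
makes the positive cone closed, and dyadic multiples of a positive element are positive. -/
lemma smul_nonneg_of_hasSolidNorm {r : ℝ} (hr : 0 ≤ r) {x : X} (hx : 0 ≤ x) : 0 ≤ r • x := by
  have dyadic (k : ℕ) : (0 : X) ≤ ((⌊r * 2 ^ k⌋₊ : ℝ) / 2 ^ k) • x := by
    have h2k : ((2 : ℝ) ^ k) ≠ 0 := by positivity
    have hpow : (0 : X) ≤ ((2 : ℝ) ^ k)⁻¹ • x := by
      refine nonneg_of_two_pow_nsmul_nonneg k ?_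
      rwa [← Nat.cast_smul_eq_nsmul ℝ, Nat.cast_pow, Nat.cast_ofNat, smul_inv_smul₀ h2k]
    rw [div_eq_mul_inv, mul_smul, Nat.cast_smul_eq_nsmul]
    exact nsmul_nonneg hpow _
  have hlim : Tendsto (fun k : ℕ ↦ ((⌊r * 2 ^ k⌋₊ : ℝ) / 2 ^ k) • x) atTop (𝓝 (r • x)) :=
    ((tendsto_nat_floor_mul_div_atTop hr).comp
      (tendsto_pow_atTop_atTop_of_one_lt one_lt_two)).smul_const x
  exact isClosed_nonneg.mem_of_tendsto hlim (Eventually.of_forall dyadic)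

instance HasSolidNorm.isOrderedModule : IsOrderedModule ℝ X :=
  .of_smul_nonneg fun _ hr _ hx ↦ smul_nonneg_of_hasSolidNorm hr hx

end HasSolidNorm

section OrderedModule

variable {𝕜 α : Type*} [Semifield 𝕜] [LinearOrder 𝕜] [IsStrictOrderedRing 𝕜]
  [Lattice α] [AddCommGroup α] [Module 𝕜 α]

lemma smul_inf_of_pos [PosSMulMono 𝕜 α] {r : 𝕜} (hr : 0 < r) (x y : α) :
    r • (x ⊓ y) = r • x ⊓ r • y :=
  (OrderIso.smulRight hr).map_inf x y

lemma abs_smul_of_nonneg [IsOrderedAddMonoid α] [PosSMulMono 𝕜 α] {r : 𝕜} (hr : 0 ≤ r) (x : α) :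
    |r • x| = r • |x| := by
  rcases hr.eq_or_lt with rfl | hr
  · simp
  rw [abs, abs, ← smul_neg]
  exact ((OrderIso.smulRight hr).map_sup x (-x)).symm

lemma smul_abs_inf_abs_inv_smul_le [IsOrderedAddMonoid α] [IsOrderedModule 𝕜 α] {t s : 𝕜}
    (ht : 0 < t) (hts : t ≤ s) (a b : α) :
    t • (|t⁻¹ • a| ⊓ |s⁻¹ • b|) ≤ |a| ⊓ |b| := by
  have hs : 0 < s := ht.trans_le hts
  rw [smul_inf_of_pos ht, abs_smul_of_nonneg (inv_nonneg.2 ht.le),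
    abs_smul_of_nonneg (inv_nonneg.2 hs.le), smul_inv_smul₀ ht.ne', smul_smul]
  exact inf_le_inf_left _
    (smul_le_of_le_one_left (abs_nonneg b) (mul_inv_le_one_of_le₀ hts hs.le))

end OrderedModule

section PhaseRetrieval

variable {X : Type*} [NormedAddCommGroup X] [Lattice X] [HasSolidNorm X] [IsOrderedAddMonoid X]
  [NormedSpace ℝ X] {E : Submodule ℝ X}

lemma eq_zero_or_eq_zero_of_abs_inf_abs_eq_zero
    (hPR : ∀ f ∈ E, ∀ g ∈ E, |f| = |g| → f = g ∨ f = -g) {u v : X} (hu : u ∈ E) (hv : v ∈ E)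
    (huv : |u| ⊓ |v| = 0) : u = 0 ∨ v = 0 := by
  have hdiff : u + v - (u - v) = (2 : ℝ) • v := by rw [two_smul]; abel
  have hsum : u + v + (u - v) = (2 : ℝ) • u := by rw [two_smul]; abel
  have habs : |u + v| = |u - v| := by
    have h := abs_sub_inf_abs_add (u + v) (u - v)
    rw [hdiff, hsum, abs_smul_of_nonneg zero_le_two, abs_smul_of_nonneg zero_le_two,
      ← smul_inf_of_pos two_pos, inf_comm, huv, smul_zero] at h
    rw [← sub_eq_zero, ← norm_eq_zero, ← norm_abs_eq_norm, ← h, norm_zero]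
  rcases hPR _ (add_mem hu hv) _ (sub_mem hu hv) habs with h | h
  · rw [h, sub_self, eq_comm, smul_eq_zero] at hdiff
    exact .inr (hdiff.resolve_left two_ne_zero)
  · rw [h, neg_add_cancel, eq_comm, smul_eq_zero] at hsum
    exact .inl (hsum.resolve_left two_ne_zero)

lemma exists_pos_le_norm_abs_inf_abs [FiniteDimensional ℝ E]
    (hPR : ∀ f ∈ E, ∀ g ∈ E, |f| = |g| → f = g ∨ f = -g) :
    ∃ δ > 0, ∀ u ∈ E, ∀ v ∈ E, ‖u‖ = 1 → ‖v‖ = 1 → δ ≤ ‖|u| ⊓ |v|‖ := by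
  have hcont : Continuous fun p : E × E ↦ ‖|(p.1 : X)| ⊓ |(p.2 : X)|‖ := by
    simp only [abs]; fun_prop
  obtain ⟨δ, hδ, hle⟩ := ((isCompact_sphere (0 : E) 1).prod (isCompact_sphere (0 : E) 1))
    |>.exists_forall_le' hcont.continuousOn (a := 0) fun ⟨u, v⟩ ⟨hu, hv⟩ ↦ by
      rw [mem_sphere_zero_iff_norm] at hu hv
      refine norm_pos_iff.2 fun huv ↦ ?_
      rcases eq_zero_or_eq_zero_of_abs_inf_abs_eq_zero hPR u.2 v.2 huv with h | h
      · simp [h] at hu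
      · simp [h] at hv
  exact ⟨δ, hδ, fun u hu v hv hu1 hv1 ↦ hle (⟨u, hu⟩, ⟨v, hv⟩) ⟨by simpa, by simpa⟩⟩

lemma mul_min_norm_sub_norm_add_le {δ : ℝ}
    (hδ : ∀ u ∈ E, ∀ v ∈ E, ‖u‖ = 1 → ‖v‖ = 1 → δ ≤ ‖|u| ⊓ |v|‖) {f g : X} (hf : f ∈ E)
    (hg : g ∈ E) : δ * min ‖f - g‖ ‖f + g‖ ≤ ‖|f| - |g|‖ := by
  wlog hle : ‖f - g‖ ≤ ‖f + g‖ generalizing g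
  · simpa [min_comm, ← sub_eq_add_neg] using
      this (neg_mem hg) (by simpa [← sub_eq_add_neg] using le_of_not_ge hle)
  rw [min_eq_left hle]
  rcases (norm_nonneg (f - g)).eq_or_lt with ht | ht
  · rw [← ht, mul_zero]
    exact norm_nonneg _
  have hs := ht.trans_le hle
  set t := ‖f - g‖
  set s := ‖f + g‖
  have hunit : δ ≤ ‖|t⁻¹ • (f - g)| ⊓ |s⁻¹ • (f + g)|‖ :=
    hδ _ (E.smul_mem _ (sub_mem hf hg)) _ (E.smul_mem _ (add_mem hf hg))
      (norm_smul_inv_norm (norm_pos_iff.1 ht)) (norm_smul_inv_norm (norm_pos_iff.1 hs))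
  have hnonneg : 0 ≤ t • (|t⁻¹ • (f - g)| ⊓ |s⁻¹ • (f + g)|) :=
    smul_nonneg ht.le (le_inf (abs_nonneg _) (abs_nonneg _))
  calc δ * t ≤ ‖|t⁻¹ • (f - g)| ⊓ |s⁻¹ • (f + g)|‖ * t := by gcongr
    _ = ‖t • (|t⁻¹ • (f - g)| ⊓ |s⁻¹ • (f + g)|)‖ := by
      rw [norm_smul, Real.norm_of_nonneg ht.le, mul_comm]
    _ ≤ ‖|f - g| ⊓ |f + g|‖ := by
      refine norm_le_norm_of_abs_le_abs ?_
      rw [abs_of_nonneg hnonneg, abs_of_nonneg (le_inf (abs_nonneg _) (abs_nonneg _))]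
      exact smul_abs_inf_abs_inv_smul_le ht hle _ _
    _ = ‖|f| - |g|‖ := by rw [abs_sub_inf_abs_add, norm_abs_eq_norm]

end PhaseRetrieval

/-- In a finite dimensional subspace of a real Banach lattice, phase retrieval implies
stable phase retrieval. -/
theorem stablePhaseRetrieval_of_phaseRetrieval_finiteDimensional {X : Type*}
    [NormedAddCommGroup X] [Lattice X] [HasSolidNorm X]
    [IsOrderedAddMonoid X] [NormedSpace ℝ X] (E : Submodule ℝ X)
    [FiniteDimensional ℝ E]
    (hPR : ∀ f ∈ E, ∀ g ∈ E, |f| = |g| → f = g ∨ f = -g) :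
    ∃ C : ℝ, 1 ≤ C ∧ ∀ f ∈ E, ∀ g ∈ E, min ‖f - g‖ ‖f + g‖ ≤ C * ‖|f| - |g|‖ := by
  obtain ⟨δ, hδ, hunit⟩ := exists_pos_le_norm_abs_inf_abs hPR
  refine ⟨max 1 δ⁻¹, le_max_left _ _, fun f hf g hg ↦ ?_⟩
  calc min ‖f - g‖ ‖f + g‖ ≤ δ⁻¹ * ‖|f| - |g|‖ := by
        rw [inv_mul_eq_div, le_div_iff₀' hδ]
        exact mul_min_norm_sub_norm_add_le hunit hf hg
    _ ≤ max 1 δ⁻¹ * ‖|f| - |g|‖ := by gcongr; exact le_max_right _ _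
end

section
/- Suppose E is a subspace of a real Banach lattice X doing C-stable phase retrieval. If F is a subspace of X such that for every x ∈ F with ‖x‖ ≤ 1 there is x' ∈ E with ‖x - x'‖ < δ, where δ satisfies 1/C' := (1/C)(1/√2 - 2δ) - 2δ > 0, then F does C'-stable phase retrieval. -/
/-!
Normalise `u, v ∈ F` with `‖u‖ ≤ ‖v‖` to unit vectors and approximate them by `u', v' ∈ E`.
Through the lattice identity `|f + g| ⊓ |f - g| = ||f| - |g||`, `C`-stable phase retrieval of `E`
says exactly `min ‖u'‖ ‖v'‖ ≤ C ‖|u'| ⊓ |v'|‖`. Since `|·|` and `⊓` are 1-Lipschitz this passes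
to the unit vectors with losses `δ` and `2δ`, and positive homogeneity of `⊓` undoes the
normalisation. The resulting constant `((1 - δ) / C - 2δ)⁻¹` is at most `C'`.
-/

open Filter Topology

section LatticeOrderedGroup

variable {α : Type*} [Lattice α] [AddCommGroup α] [IsOrderedAddMonoid α]

theorem add_inf_sub_eq_sub_abs (x y : α) : (x + y) ⊓ (x - y) = x - |y| := by
  rw [abs, sub_eq_add_neg x y, sub_eq_add_neg, neg_sup, neg_neg, inf_comm (-y) y, ← add_inf]

theorem abs_add_inf_abs_sub (a b : α) : |a + b| ⊓ |a - b| = |(|a| - |b|)| := by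
  let := AddCommGroup.toDistribLattice α
  have h₁ : (a + b) ⊓ (a - b) = a - |b| := add_inf_sub_eq_sub_abs a b
  have h₂ : (a + b) ⊓ -(a - b) = b - |a| := by
    rw [neg_sub, add_comm, add_inf_sub_eq_sub_abs]
  have h₃ : -(a + b) ⊓ (a - b) = -b - |a| := by
    rw [← add_inf_sub_eq_sub_abs, inf_comm]; congr 1 <;> abel
  have h₄ : -(a + b) ⊓ -(a - b) = -a - |b| := by
    rw [← add_inf_sub_eq_sub_abs, inf_comm]; congr 1 <;> abel
  calc |a + b| ⊓ |a - b|
      = ((a + b) ⊓ (a - b) ⊔ (a + b) ⊓ -(a - b)) ⊔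
          (-(a + b) ⊓ (a - b) ⊔ -(a + b) ⊓ -(a - b)) := by
        rw [abs, abs, inf_sup_right, inf_sup_left, inf_sup_left]
    _ = ((a - |b|) ⊔ (-a - |b|)) ⊔ ((b - |a|) ⊔ (-b - |a|)) := by
        rw [h₁, h₂, h₃, h₄]; ac_rfl
    _ = |(|a| - |b|)| := by
        rw [← sup_sub, ← sup_sub]
        show (|a| - |b|) ⊔ (|b| - |a|) = _
        rw [← neg_sub |a| |b|]; rfl

end LatticeOrderedGroup

section OrderedModule

variable {𝕜 M : Type*} [Field 𝕜] [LinearOrder 𝕜] [IsStrictOrderedRing 𝕜]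
  [Lattice M] [AddCommGroup M] [Module 𝕜 M] [PosSMulMono 𝕜 M]

theorem smul_sup_of_nonneg {c : 𝕜} (hc : 0 ≤ c) (x y : M) : c • (x ⊔ y) = c • x ⊔ c • y := by
  rcases hc.eq_or_lt with rfl | hc
  · simp
  · exact (OrderIso.smulRight hc).map_sup x y

theorem smul_inf_of_nonneg {c : 𝕜} (hc : 0 ≤ c) (x y : M) : c • (x ⊓ y) = c • x ⊓ c • y := by
  rcases hc.eq_or_lt with rfl | hc
  · simp
  · exact (OrderIso.smulRight hc).map_inf x y

theorem abs_smul_of_nonneg_s11 {c : 𝕜} (hc : 0 ≤ c) (x : M) : |c • x| = c • |x| := by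
  rw [abs, abs, smul_sup_of_nonneg hc, smul_neg]

end OrderedModule

section NormedLattice

variable {X : Type*} [NormedAddCommGroup X] [Lattice X] [HasSolidNorm X] [IsOrderedAddMonoid X]
  [NormedSpace ℝ X]

-- Dyadic multiples of a positive vector are positive (`nsmul_two_semiclosed` halves), and they
-- approximate every nonnegative multiple inside the closed positive cone.
instance HasSolidNorm.posSMulMono : PosSMulMono ℝ X :=
  PosSMulMono.of_smul_nonneg fun c hc x hx => by
    have hdyadic : ∀ k n : ℕ, 0 ≤ ((k : ℝ) / 2 ^ n) • x := by
      intro k n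
      induction n with
      | zero => simpa [Nat.cast_smul_eq_nsmul] using nsmul_nonneg hx k
      | succ n ih =>
        refine nsmul_two_semiclosed ?_
        rwa [← Nat.cast_smul_eq_nsmul ℝ, smul_smul, Nat.cast_ofNat, pow_succ, mul_div_assoc',
          mul_comm, mul_div_mul_right _ _ two_ne_zero]
    have htend : Tendsto (fun n : ℕ => (⌊c * 2 ^ n⌋₊ : ℝ) / 2 ^ n) atTop (𝓝 c) :=
      (tendsto_nat_floor_mul_div_atTop hc).comp (tendsto_pow_atTop_atTop_of_one_lt one_lt_two)
    exact isClosed_nonneg.mem_of_tendsto (htend.smul_const x)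
      (Eventually.of_forall fun n => hdyadic _ n)

theorem norm_abs_smul_inf_abs_smul_le {a b : ℝ} (hb : 0 ≤ b) (hba : b ≤ a) (u v : X) :
    ‖|a • u| ⊓ |b • v|‖ ≤ a * ‖|u| ⊓ |v|‖ := by
  have ha : 0 ≤ a := hb.trans hba
  have hle : |a • u| ⊓ |b • v| ≤ a • (|u| ⊓ |v|) := by
    rw [abs_smul_of_nonneg_s11 ha, abs_smul_of_nonneg_s11 hb, smul_inf_of_nonneg ha]
    exact inf_le_inf_left _ (smul_le_smul_of_nonneg_right hba (abs_nonneg v))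
  have hnonneg : 0 ≤ |a • u| ⊓ |b • v| := le_inf (abs_nonneg _) (abs_nonneg _)
  calc ‖|a • u| ⊓ |b • v|‖ ≤ ‖a • (|u| ⊓ |v|)‖ :=
        norm_le_norm_of_abs_le_abs <| by
          rwa [abs_of_nonneg hnonneg, abs_of_nonneg (hnonneg.trans hle)]
    _ = a * ‖|u| ⊓ |v|‖ := by rw [norm_smul, Real.norm_of_nonneg ha]

end NormedLattice

section StablePhaseRetrieval

variable {X : Type*} [NormedAddCommGroup X] [Lattice X] [NormedSpace ℝ X]

def StablePhaseRetrieval (E : Submodule ℝ X) (C : ℝ) : Prop :=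
  ∀ f ∈ E, ∀ g ∈ E, min ‖f - g‖ ‖f + g‖ ≤ C * ‖|f| - |g|‖

variable {E F : Submodule ℝ X} {C δ : ℝ}

theorem StablePhaseRetrieval.mono {D : ℝ} (h : StablePhaseRetrieval E C) (hCD : C ≤ D) :
    StablePhaseRetrieval E D := fun f hf g hg =>
  (h f hf g hg).trans (mul_le_mul_of_nonneg_right hCD (norm_nonneg _))

variable [HasSolidNorm X] [IsOrderedAddMonoid X]

theorem stablePhaseRetrieval_iff_min_norm_le_inf :
    StablePhaseRetrieval E C ↔ ∀ u ∈ E, ∀ v ∈ E, min ‖u‖ ‖v‖ ≤ C * ‖|u| ⊓ |v|‖ := by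
  have key (f g : X) : ‖|f| - |g|‖ = ‖|f - g| ⊓ |f + g|‖ := by
    rw [inf_comm, abs_add_inf_abs_sub, norm_abs_eq_norm]
  refine ⟨fun h u hu v hv => ?_, fun h f hf g hg => ?_⟩
  · have hfg := h (2⁻¹ • (u + v)) (E.smul_mem _ (E.add_mem hu hv))
      (2⁻¹ • (v - u)) (E.smul_mem _ (E.sub_mem hv hu))
    have hsub : (2⁻¹ : ℝ) • (u + v) - (2⁻¹ : ℝ) • (v - u) = u := by module
    have hadd : (2⁻¹ : ℝ) • (u + v) + (2⁻¹ : ℝ) • (v - u) = v := by module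
    rwa [key, hsub, hadd] at hfg
  · rw [key]
    exact h _ (E.sub_mem hf hg) _ (E.add_mem hf hg)

theorem StablePhaseRetrieval.min_norm_sub_le_of_approx (hE : StablePhaseRetrieval E C)
    (hC : 0 ≤ C) (happrox : ∀ x ∈ F, ‖x‖ ≤ 1 → ∃ x' ∈ E, ‖x - x'‖ < δ)
    {u v : X} (hu : u ∈ F) (hv : v ∈ F) (hu₁ : ‖u‖ ≤ 1) (hv₁ : ‖v‖ ≤ 1) :
    min ‖u‖ ‖v‖ - δ ≤ C * (‖|u| ⊓ |v|‖ + 2 * δ) := by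
  obtain ⟨u', hu'E, hu'⟩ := happrox u hu hu₁
  obtain ⟨v', hv'E, hv'⟩ := happrox v hv hv₁
  have hmin : min ‖u‖ ‖v‖ - δ ≤ min ‖u'‖ ‖v'‖ := by
    rw [← min_sub_sub_right]
    exact min_le_min (by linarith [norm_sub_norm_le u u']) (by linarith [norm_sub_norm_le v v'])
  have hinf : ‖|u'| ⊓ |v'|‖ ≤ ‖|u| ⊓ |v|‖ + 2 * δ := by
    have := norm_inf_sub_inf_le_add_norm |u'| |v'| |u| |v|
    have := norm_sub_norm_le (|u'| ⊓ |v'|) (|u| ⊓ |v|)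
    have := norm_abs_sub_abs u' u
    have := norm_abs_sub_abs v' v
    rw [norm_sub_rev] at hu' hv'
    linarith
  calc min ‖u‖ ‖v‖ - δ ≤ min ‖u'‖ ‖v'‖ := hmin
    _ ≤ C * ‖|u'| ⊓ |v'|‖ := stablePhaseRetrieval_iff_min_norm_le_inf.1 hE u' hu'E v' hv'E
    _ ≤ C * (‖|u| ⊓ |v|‖ + 2 * δ) := mul_le_mul_of_nonneg_left hinf hC

theorem StablePhaseRetrieval.norm_mul_le_norm_inf_of_approx (hE : StablePhaseRetrieval E C)
    (hC : 0 < C) (happrox : ∀ x ∈ F, ‖x‖ ≤ 1 → ∃ x' ∈ E, ‖x - x'‖ < δ)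
    {u v : X} (hu : u ∈ F) (hv : v ∈ F) (huv : ‖u‖ ≤ ‖v‖) :
    ‖u‖ * ((1 - δ) / C - 2 * δ) ≤ ‖|u| ⊓ |v|‖ := by
  rcases (norm_nonneg u).eq_or_lt with hu₀ | hu₀
  · rw [← hu₀, zero_mul]
    exact norm_nonneg _
  have hv₀ : 0 < ‖v‖ := hu₀.trans_le huv
  have hunit : ∀ {x : X}, 0 < ‖x‖ → ‖‖x‖⁻¹ • x‖ = 1 := fun hx => by
    rw [norm_smul, norm_inv, norm_norm, inv_mul_cancel₀ hx.ne']
  have hmain := hE.min_norm_sub_le_of_approx hC.le happrox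
    (F.smul_mem ‖u‖⁻¹ hu) (F.smul_mem ‖v‖⁻¹ hv) (hunit hu₀).le (hunit hv₀).le
  rw [hunit hu₀, hunit hv₀, min_self] at hmain
  have hscale := norm_abs_smul_inf_abs_smul_le (inv_nonneg.2 hv₀.le) (inv_anti₀ hu₀ huv) u v
  have hK : (1 - δ) / C - 2 * δ ≤ ‖u‖⁻¹ * ‖|u| ⊓ |v|‖ := by
    rw [sub_le_iff_le_add, div_le_iff₀' hC]
    exact hmain.trans (by gcongr)
  calc ‖u‖ * ((1 - δ) / C - 2 * δ) ≤ ‖u‖ * (‖u‖⁻¹ * ‖|u| ⊓ |v|‖) :=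
        mul_le_mul_of_nonneg_left hK hu₀.le
    _ = ‖|u| ⊓ |v|‖ := mul_inv_cancel_left₀ hu₀.ne' _

theorem StablePhaseRetrieval.of_approx (hE : StablePhaseRetrieval E C) (hC : 0 < C)
    (happrox : ∀ x ∈ F, ‖x‖ ≤ 1 → ∃ x' ∈ E, ‖x - x'‖ < δ) (hK : 0 < (1 - δ) / C - 2 * δ) :
    StablePhaseRetrieval F ((1 - δ) / C - 2 * δ)⁻¹ := by
  refine stablePhaseRetrieval_iff_min_norm_le_inf.2 fun u hu v hv => ?_
  rw [← div_eq_inv_mul, le_div_iff₀ hK]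
  rcases le_total ‖u‖ ‖v‖ with huv | hvu
  · rw [min_eq_left huv]
    exact hE.norm_mul_le_norm_inf_of_approx hC happrox hu hv huv
  · rw [min_eq_right hvu, inf_comm]
    exact hE.norm_mul_le_norm_inf_of_approx hC happrox hv hu hvu

end StablePhaseRetrieval

/-- Stability of SPR under one-sided Hausdorff-distance perturbation: if `E` does
`C`-stable phase retrieval and every unit-ball element of `F` is within `δ` of `E`,
where `1/C' = (1/C)(1/√2 - 2δ) - 2δ > 0`, then `F` does `C'`-stable phase retrieval. -/
theorem SPR_stable_under_perturbation {X : Type*} [NormedAddCommGroup X] [Lattice X]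
    [HasSolidNorm X] [IsOrderedAddMonoid X] [NormedSpace ℝ X] (E F : Submodule ℝ X) (C C' δ : ℝ) (hC : 1 ≤ C) (hδ : 0 < δ)
    (hSPR : ∀ f ∈ E, ∀ g ∈ E, min ‖f - g‖ ‖f + g‖ ≤ C * ‖|f| - |g|‖)
    (happrox : ∀ x ∈ F, ‖x‖ ≤ 1 → ∃ x' ∈ E, ‖x - x'‖ < δ)
    (hpos : 0 < (1 / C) * (1 / Real.sqrt 2 - 2 * δ) - 2 * δ)
    (hC' : 1 / C' = (1 / C) * (1 / Real.sqrt 2 - 2 * δ) - 2 * δ) :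
    ∀ f ∈ F, ∀ g ∈ F, min ‖f - g‖ ‖f + g‖ ≤ C' * ‖|f| - |g|‖ := by
  have hC₀ : 0 < C := zero_lt_one.trans_le hC
  have hsqrt : 1 / Real.sqrt 2 ≤ 1 :=
    (div_le_one (Real.sqrt_pos.2 two_pos)).2 (Real.one_le_sqrt.2 one_le_two)
  have hle : 1 / C' ≤ (1 - δ) / C - 2 * δ := by
    rw [hC', one_div_mul_eq_div]
    gcongr
    linarith
  have hK : 0 < (1 - δ) / C - 2 * δ := (hC' ▸ hpos).trans_le hle
  refine (StablePhaseRetrieval.of_approx hSPR hC₀ happrox hK).mono ?_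
  simpa using inv_anti₀ (hC' ▸ hpos) hle
end

section
/- Let K be a compact Hausdorff space and E a subspace of real C(K). If there exist norm-one f, g ∈ E with ‖|f| ∧ |g|‖ < ε < 1/2, then both ‖f+g‖ and ‖f-g‖ lie in (1-ε, 1+ε), and the normalized vectors u = (f+g)/‖f+g‖, v = (f-g)/‖f-g‖ satisfy ‖u+v‖ > 2-2ε and ‖u-v‖ > 2-2ε. Consequently, any uniformly non-square subspace of C(K) does stable phase retrieval. -/
private lemma min_abs_le_aux (a b : ℝ) : min |a - b| |a + b| ≤ |(|a| - |b|)| := by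
  rcases le_total 0 a with ha | ha <;> rcases le_total 0 b with hb | hb
  · rw [abs_of_nonneg ha, abs_of_nonneg hb]; exact min_le_left _ _
  · rw [abs_of_nonneg ha, abs_of_nonpos hb, sub_neg_eq_add]; exact min_le_right _ _
  · rw [abs_of_nonpos ha, abs_of_nonneg hb, show -a - b = -(a + b) by ring, abs_neg]
    exact min_le_right _ _
  · rw [abs_of_nonpos ha, abs_of_nonpos hb, show -a - -b = -(a - b) by ring, abs_neg]
    exact min_le_left _ _

private lemma normalize_close {V : Type*} [NormedAddCommGroup V] [NormedSpace ℝ V]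
    (h : V) (ε : ℝ) (h0 : 0 < ‖h‖) (h1 : 1 - ε < ‖h‖) (h2 : ‖h‖ < 1 + ε) :
    ‖(1 / ‖h‖) • h - h‖ < ε := by
  have e : (1 / ‖h‖) • h - h = (1 / ‖h‖ - 1) • h := by rw [sub_smul, one_smul]
  rw [e, norm_smul (1 / ‖h‖ - 1) h, Real.norm_eq_abs]
  have e2 : |1 / ‖h‖ - 1| * ‖h‖ = |(1 / ‖h‖ - 1) * ‖h‖| := by
    rw [abs_mul, abs_of_nonneg h0.le]
  rw [e2, show (1 / ‖h‖ - 1) * ‖h‖ = 1 - ‖h‖ by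
    rw [sub_mul, one_div, inv_mul_cancel₀ h0.ne', one_mul]]
  exact abs_lt.mpr ⟨by linarith, by linarith⟩

private lemma close_sum {V : Type*} [NormedAddCommGroup V] [NormedSpace ℝ V]
    (f g u v : V) (ε : ℝ) (hf : ‖f‖ = 1) (hu : ‖u - (f + g)‖ < ε)
    (hv : ‖v - (f - g)‖ < ε) : 2 - 2 * ε < ‖u + v‖ := by
  have key : ‖(2:ℝ) • f‖ = 2 := by
    rw [norm_smul (2:ℝ) f, hf, Real.norm_eq_abs]; norm_num
  have e : (2:ℝ) • f = (u + v) - (u - (f + g)) - (v - (f - g)) := by module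
  have t1 := norm_sub_le ((u + v) - (u - (f + g))) (v - (f - g))
  have t2 := norm_sub_le (u + v) (u - (f + g))
  rw [e] at key
  linarith

private lemma close_diff {V : Type*} [NormedAddCommGroup V] [NormedSpace ℝ V]
    (f g u v : V) (ε : ℝ) (hg : ‖g‖ = 1) (hu : ‖u - (f + g)‖ < ε)
    (hv : ‖v - (f - g)‖ < ε) : 2 - 2 * ε < ‖u - v‖ := by
  have key : ‖(2:ℝ) • g‖ = 2 := by
    rw [norm_smul (2:ℝ) g, hg, Real.norm_eq_abs]; norm_num
  have e : (2:ℝ) • g = (u - v) - (u - (f + g)) + (v - (f - g)) := by module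
  have t1 := norm_add_le ((u - v) - (u - (f + g))) (v - (f - g))
  have t2 := norm_sub_le (u - v) (u - (f + g))
  rw [e] at key
  linarith

private lemma part1_aux {K : Type*} [TopologicalSpace K] [CompactSpace K]
    (ε : ℝ) (hε : ε < 1 / 2) (f g : C(K, ℝ)) (hf : ‖f‖ = 1) (hg : ‖g‖ = 1)
    (hm : ‖|f| ⊓ |g|‖ < ε) :
    ‖f + g‖ ∈ Set.Ioo (1 - ε) (1 + ε) ∧ ‖f - g‖ ∈ Set.Ioo (1 - ε) (1 + ε) ∧
      2 - 2 * ε < ‖(1 / ‖f + g‖) • (f + g) + (1 / ‖f - g‖) • (f - g)‖ ∧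
      2 - 2 * ε < ‖(1 / ‖f + g‖) • (f + g) - (1 / ‖f - g‖) • (f - g)‖ := by
  set m := ‖|f| ⊓ |g|‖ with hmdef
  have hm0 : 0 ≤ m := norm_nonneg _
  have hminx : ∀ x : K, min |f x| |g x| ≤ m := by
    intro x
    have h1 : (|f| ⊓ |g|) x = min |f x| |g x| := by simp [ContinuousMap.inf_apply]
    have h2 : |(|f| ⊓ |g|) x| ≤ m := by simpa using (|f| ⊓ |g|).norm_coe_le_norm x
    rw [h1] at h2
    exact le_trans (le_abs_self _) h2
  have hfx : ∀ x : K, |f x| ≤ 1 := fun x => by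
    have := f.norm_coe_le_norm x; rw [hf] at this; simpa using this
  have hgx : ∀ x : K, |g x| ≤ 1 := fun x => by
    have := g.norm_coe_le_norm x; rw [hg] at this; simpa using this
  have hNp_le : ‖f + g‖ ≤ 1 + m := by
    rw [ContinuousMap.norm_le _ (by linarith)]
    intro x
    simp only [ContinuousMap.add_apply, Real.norm_eq_abs]
    have h1 : |f x + g x| ≤ |f x| + |g x| := abs_add_le _ _
    have := hminx x
    rcases le_total |f x| |g x| with h | h
    · rw [min_eq_left h] at this; linarith [hgx x]
    · rw [min_eq_right h] at this; linarith [hfx x]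
  have hNm_le : ‖f - g‖ ≤ 1 + m := by
    rw [ContinuousMap.norm_le _ (by linarith)]
    intro x
    simp only [ContinuousMap.sub_apply, Real.norm_eq_abs]
    have h1 : |f x - g x| ≤ |f x| + |g x| := abs_sub _ _
    have := hminx x
    rcases le_total |f x| |g x| with h | h
    · rw [min_eq_left h] at this; linarith [hgx x]
    · rw [min_eq_right h] at this; linarith [hfx x]
  have hlb : (1:ℝ) ≤ ‖f + g‖ + m := by
    have : ‖f‖ ≤ ‖f + g‖ + m := by
      rw [ContinuousMap.norm_le _ (by positivity)]
      intro x
      simp only [Real.norm_eq_abs]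
      have h1 : |f x| ≤ |f x + g x| + |g x| := by
        have := abs_add_le (f x + g x) (-g x); simpa using this
      have h2 : |f x + g x| ≤ ‖f + g‖ := by
        have := (f + g).norm_coe_le_norm x; simpa using this
      have := hminx x
      rcases le_total |f x| |g x| with h | h
      · rw [min_eq_left h] at this; linarith [norm_nonneg (f + g)]
      · rw [min_eq_right h] at this; linarith
    rw [hf] at this; exact this
  have hlb' : (1:ℝ) ≤ ‖f - g‖ + m := by
    have : ‖f‖ ≤ ‖f - g‖ + m := by
      rw [ContinuousMap.norm_le _ (by positivity)]
      intro x
      simp only [Real.norm_eq_abs]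
      have h1 : |f x| ≤ |f x - g x| + |g x| := by
        have := abs_add_le (f x - g x) (g x); simpa using this
      have h2 : |f x - g x| ≤ ‖f - g‖ := by
        have := (f - g).norm_coe_le_norm x; simpa using this
      have := hminx x
      rcases le_total |f x| |g x| with h | h
      · rw [min_eq_left h] at this; linarith [norm_nonneg (f - g)]
      · rw [min_eq_right h] at this; linarith
    rw [hf] at this; exact this
  have hNp : ‖f + g‖ ∈ Set.Ioo (1 - ε) (1 + ε) := ⟨by linarith, by linarith⟩
  have hNm : ‖f - g‖ ∈ Set.Ioo (1 - ε) (1 + ε) := ⟨by linarith, by linarith⟩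
  have hNp0 : (0:ℝ) < ‖f + g‖ := by have := hNp.1; linarith
  have hNm0 : (0:ℝ) < ‖f - g‖ := by have := hNm.1; linarith
  have hu : ‖(1 / ‖f + g‖) • (f + g) - (f + g)‖ < ε :=
    normalize_close (f + g) ε hNp0 hNp.1 hNp.2
  have hv : ‖(1 / ‖f - g‖) • (f - g) - (f - g)‖ < ε :=
    normalize_close (f - g) ε hNm0 hNm.1 hNm.2
  exact ⟨hNp, hNm, close_sum f g _ _ ε hf hu hv, close_diff f g _ _ ε hg hu hv⟩

/-- In `C(K)`: if norm-one `f, g` in a subspace `E` satisfy `‖|f| ⊓ |g|‖ < ε < 1/2`, then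
`‖f+g‖, ‖f-g‖ ∈ (1-ε, 1+ε)` and the normalizations `u, v` of `f+g, f-g` satisfy
`‖u+v‖, ‖u-v‖ > 2-2ε`. Consequently any uniformly non-square subspace of `C(K)` does
stable phase retrieval. -/
theorem uniformly_nonsquare_subspace_CK_SPR {K : Type*} [TopologicalSpace K]
    [CompactSpace K] (E : Submodule ℝ C(K, ℝ)) :
    (∀ ε : ℝ, ε < 1 / 2 → ∀ f ∈ E, ∀ g ∈ E, ‖f‖ = 1 → ‖g‖ = 1 → ‖|f| ⊓ |g|‖ < ε →
      ‖f + g‖ ∈ Set.Ioo (1 - ε) (1 + ε) ∧ ‖f - g‖ ∈ Set.Ioo (1 - ε) (1 + ε) ∧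
      2 - 2 * ε < ‖(1 / ‖f + g‖) • (f + g) + (1 / ‖f - g‖) • (f - g)‖ ∧
      2 - 2 * ε < ‖(1 / ‖f + g‖) • (f + g) - (1 / ‖f - g‖) • (f - g)‖) ∧
    ((∃ ε > (0:ℝ), ∀ f ∈ E, ∀ g ∈ E, ‖f‖ = 1 → ‖g‖ = 1 →
        min ‖f + g‖ ‖f - g‖ < 2 - ε) →
      ∃ C : ℝ, ∀ f ∈ E, ∀ g ∈ E, min ‖f - g‖ ‖f + g‖ ≤ C * ‖|f| - |g|‖) := by
  constructor
  · intro ε hε f _ g _ hf hg hm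
    exact part1_aux ε hε f g hf hg hm
  · rintro ⟨ε₀, hε₀, hprop⟩
    set δ : ℝ := min ε₀ 1 / 4 with hδdef
    have hmin1 : min ε₀ 1 ≤ 1 := min_le_right _ _
    have hminε : min ε₀ 1 ≤ ε₀ := min_le_left _ _
    have hδ0 : 0 < δ := by
      have : 0 < min ε₀ 1 := lt_min hε₀ one_pos
      positivity
    have hδhalf : δ < 1 / 2 := by rw [hδdef]; linarith
    have h2δ : 2 * δ ≤ ε₀ := by rw [hδdef]; linarith
    -- key claim: for norm-one f, g in E, δ ≤ ‖|f| ⊓ |g|‖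
    have hkey : ∀ f ∈ E, ∀ g ∈ E, ‖f‖ = 1 → ‖g‖ = 1 → δ ≤ ‖|f| ⊓ |g|‖ := by
      intro f hfE g hgE hf hg
      by_contra hlt
      push_neg at hlt
      obtain ⟨hNp, hNm, h1, h2⟩ := part1_aux δ hδhalf f g hf hg hlt
      have hNp0 : (0:ℝ) < ‖f + g‖ := lt_of_lt_of_le (by linarith) hNp.1.le
      have hNm0 : (0:ℝ) < ‖f - g‖ := lt_of_lt_of_le (by linarith) hNm.1.le
      set u := (1 / ‖f + g‖) • (f + g) with hudef
      set v := (1 / ‖f - g‖) • (f - g) with hvdef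
      have huE : u ∈ E := E.smul_mem _ (E.add_mem hfE hgE)
      have hvE : v ∈ E := E.smul_mem _ (E.sub_mem hfE hgE)
      have hun : ‖u‖ = 1 := by
        rw [hudef, norm_smul (1 / ‖f + g‖) (f + g), Real.norm_eq_abs,
          abs_of_pos (by positivity), one_div, inv_mul_cancel₀ hNp0.ne']
      have hvn : ‖v‖ = 1 := by
        rw [hvdef, norm_smul (1 / ‖f - g‖) (f - g), Real.norm_eq_abs,
          abs_of_pos (by positivity), one_div, inv_mul_cancel₀ hNm0.ne']
      have := hprop u huE v hvE hun hvn
      have hlt1 : 2 - ε₀ < ‖u + v‖ := by linarith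
      have hlt2 : 2 - ε₀ < ‖u - v‖ := by linarith
      rcases min_cases ‖u + v‖ ‖u - v‖ with ⟨he, _⟩ | ⟨he, _⟩ <;> rw [he] at this <;> linarith
    refine ⟨1 / δ, ?_⟩
    intro f hfE g hgE
    set D := ‖|f| - |g|‖ with hDdef
    have hD0 : 0 ≤ D := norm_nonneg _
    rcases eq_or_ne (f - g) 0 with h1 | h1
    · rw [h1, norm_zero]
      calc min 0 ‖f + g‖ ≤ 0 := min_le_left _ _
        _ ≤ 1 / δ * D := by positivity
    rcases eq_or_ne (f + g) 0 with h2 | h2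
    · rw [h2, norm_zero]
      calc min ‖f - g‖ 0 ≤ 0 := min_le_right _ _
        _ ≤ 1 / δ * D := by positivity
    have hN1 : (0:ℝ) < ‖f - g‖ := norm_pos_iff.mpr h1
    have hN2 : (0:ℝ) < ‖f + g‖ := norm_pos_iff.mpr h2
    set u := (1 / ‖f - g‖) • (f - g) with hudef
    set v := (1 / ‖f + g‖) • (f + g) with hvdef
    have huE : u ∈ E := E.smul_mem _ (E.sub_mem hfE hgE)
    have hvE : v ∈ E := E.smul_mem _ (E.add_mem hfE hgE)
    have hun : ‖u‖ = 1 := by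
      rw [hudef, norm_smul (1 / ‖f - g‖) (f - g), Real.norm_eq_abs,
        abs_of_pos (by positivity), one_div, inv_mul_cancel₀ hN1.ne']
    have hvn : ‖v‖ = 1 := by
      rw [hvdef, norm_smul (1 / ‖f + g‖) (f + g), Real.norm_eq_abs,
        abs_of_pos (by positivity), one_div, inv_mul_cancel₀ hN2.ne']
    set M := min ‖f - g‖ ‖f + g‖ with hMdef
    have hM0 : 0 < M := lt_min hN1 hN2
    -- pointwise bound : ‖|u| ⊓ |v|‖ ≤ D / M
    have hbound : ‖|u| ⊓ |v|‖ ≤ D / M := by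
      rw [ContinuousMap.norm_le _ (by positivity)]
      intro x
      have h1x : (|u| ⊓ |v|) x = min |u x| |v x| := by simp [ContinuousMap.inf_apply]
      have hux : |u x| = |(f - g) x| / ‖f - g‖ := by
        rw [hudef]
        simp only [ContinuousMap.smul_apply, smul_eq_mul, abs_mul, abs_of_pos
          (show (0:ℝ) < 1 / ‖f - g‖ by positivity)]
        ring
      have hvx : |v x| = |(f + g) x| / ‖f + g‖ := by
        rw [hvdef]
        simp only [ContinuousMap.smul_apply, smul_eq_mul, abs_mul, abs_of_pos
          (show (0:ℝ) < 1 / ‖f + g‖ by positivity)]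
        ring
      have hmin : min |(f - g) x| |(f + g) x| ≤ D := by
        have e1 : (f - g) x = f x - g x := by simp
        have e2 : (f + g) x = f x + g x := by simp
        rw [e1, e2]
        refine le_trans (min_abs_le_aux (f x) (g x)) ?_
        have : (|f| - |g|) x = |f x| - |g x| := by simp
        have := (|f| - |g|).norm_coe_le_norm x
        simpa [ContinuousMap.sub_apply, ContinuousMap.abs_apply] using this
      have hle1 : |u x| ≤ |(f - g) x| / M := by
        rw [hux]
        exact div_le_div_of_nonneg_left (abs_nonneg _) hM0 (min_le_left _ _)
      have hle2 : |v x| ≤ |(f + g) x| / M := by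
        rw [hvx]
        exact div_le_div_of_nonneg_left (abs_nonneg _) hM0 (min_le_right _ _)
      have : min |u x| |v x| ≤ D / M := by
        rcases le_total |(f - g) x| |(f + g) x| with h | h
        · calc min |u x| |v x| ≤ |u x| := min_le_left _ _
            _ ≤ |(f - g) x| / M := hle1
            _ ≤ D / M := by
                apply div_le_div_of_nonneg_right ?_ hM0.le
                · rw [min_eq_left h] at hmin; exact hmin
        · calc min |u x| |v x| ≤ |v x| := min_le_right _ _
            _ ≤ |(f + g) x| / M := hle2
            _ ≤ D / M := by
                apply div_le_div_of_nonneg_right ?_ hM0.le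
                · rw [min_eq_right h] at hmin; exact hmin
      rw [Real.norm_eq_abs, h1x, abs_of_nonneg (le_min (abs_nonneg _) (abs_nonneg _))]
      exact this
    have hδle : δ ≤ D / M := le_trans (hkey u huE v hvE hun hvn) hbound
    -- conclude : M ≤ (1/δ) * D
    rw [le_div_iff₀ hM0] at hδle
    rw [div_mul_eq_mul_div, one_mul, le_div_iff₀ hδ0]
    linarith [mul_comm δ M]
end
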